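/- arXiv:2101.10686 — 5 statements merged into one kernel-verified Lean document; each statement's English description precedes it below -/
import Mathlib

section
/- For all positive integers k and m, one has the combinatorial identity Q(m+1, 2k−1; 2) = 0; explicitly, Σ_{ℓ=0}^{2k−1} C(m+ℓ, m) · s(m+2k−1, m+ℓ) · ((m+2k−2)/2)^ℓ = 0. -/
/-- Signed Stirling numbers of the first kind: coefficients of the falling factorial,
`x(x-1)⋯(x-n+1) = ∑ₖ s(n,k) xᵏ`. -/
def stirlingFirst : ℕ → ℕ → ℤ
  | 0, 0 => 1
  | 0, _ + 1 => 0
  | n + 1, 0 => -(n : ℤ) * stirlingFirst n 0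
  | n + 1, k + 1 => stirlingFirst n k - (n : ℤ) * stirlingFirst n (k + 1)

/-- `Q m k α = ∑_{ℓ=0}^{k} C(m+ℓ−1, m−1) · s(m+k−1, m+ℓ−1) · ((m+k−α)/2)^ℓ`. -/
noncomputable def Q (m k : ℕ) (α : ℝ) : ℝ :=
  ∑ ℓ ∈ Finset.range (k + 1),
    ((m + ℓ - 1).choose (m - 1) : ℝ) * (stirlingFirst (m + k - 1) (m + ℓ - 1) : ℝ) *
      (((m : ℝ) + (k : ℝ) - α) / 2) ^ ℓ

open Polynomial Finset

lemma stirlingFirst_eq_zero : ∀ n j : ℕ, n < j → stirlingFirst n j = 0 := by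
  intro n
  induction n with
  | zero =>
    intro j hj
    match j, hj with
    | j + 1, _ => rfl
  | succ n ih =>
    intro j hj
    match j, hj with
    | j + 1, hj =>
      show stirlingFirst n j - (n : ℤ) * stirlingFirst n (j + 1) = 0
      rw [ih j (by omega), ih (j + 1) (by omega)]
      ring

/-- The falling factorial polynomial over ℝ. -/
noncomputable def fallR (n : ℕ) : Polynomial ℝ := ∏ i ∈ Finset.range n, (X - C (i : ℝ))

lemma coeff_fallR (n : ℕ) : ∀ j, (fallR n).coeff j = (stirlingFirst n j : ℝ) := by
  induction n with
  | zero =>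
    intro j
    cases j with
    | zero =>
      have : stirlingFirst 0 0 = 1 := rfl
      simp [fallR, this]
    | succ j =>
      have : stirlingFirst 0 (j + 1) = 0 := rfl
      simp [fallR, this, Polynomial.coeff_one]
  | succ n ih =>
    intro j
    have hp : fallR (n + 1) = fallR n * (X - C (n : ℝ)) := Finset.prod_range_succ _ _
    rw [hp, mul_sub, coeff_sub, Polynomial.coeff_mul_C]
    cases j with
    | zero =>
      have : stirlingFirst (n + 1) 0 = -(n : ℤ) * stirlingFirst n 0 := rfl
      rw [Polynomial.mul_coeff_zero, Polynomial.coeff_X_zero, ih 0, this]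
      push_cast
      ring
    | succ j =>
      have : stirlingFirst (n + 1) (j + 1)
          = stirlingFirst n j - (n : ℤ) * stirlingFirst n (j + 1) := rfl
      rw [Polynomial.coeff_mul_X, ih j, ih (j + 1), this]
      push_cast
      ring

lemma coeff_comp_neg_X (f : Polynomial ℝ) (m : ℕ) :
    (f.comp (-X)).coeff m = (-1 : ℝ) ^ m * f.coeff m := by
  induction f using Polynomial.induction_on' with
  | add p q hp hq => simp [add_comp, hp, hq, mul_add]
  | monomial j a =>
    have h1 : (monomial j a : Polynomial ℝ) = C a * X ^ j := C_mul_X_pow_eq_monomial.symm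
    rw [h1, mul_comp, C_comp, pow_comp, X_comp,
      show (-X : Polynomial ℝ) = C (-1) * X by simp, mul_pow, ← C_pow]
    simp only [coeff_C_mul, coeff_X_pow]
    rcases eq_or_ne m j with rfl | hjm
    · simp [mul_comm]
    · simp [hjm]

/-- The main vanishing result. -/
lemma key (k m : ℕ) (hk : 1 ≤ k) :
    ∑ ℓ ∈ Finset.range (2 * k), ((m + ℓ).choose m : ℝ) *
        (stirlingFirst (m + 2 * k - 1) (m + ℓ) : ℝ) *
          (((m : ℝ) + 2 * (k : ℝ) - 2) / 2) ^ ℓ = 0 := by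
  set n : ℕ := m + 2 * k - 1 with hn
  set c : ℝ := ((m : ℝ) + 2 * (k : ℝ) - 2) / 2 with hcdef
  have hnm : n = m + (2 * k - 1) := by omega
  have hncast : (n : ℝ) = (m : ℝ) + 2 * k - 1 := by
    rw [hn]; push_cast [show (1:ℕ) ≤ m + 2 * k by omega]; ring
  have hc : 2 * c = (n : ℝ) - 1 := by rw [hcdef, hncast]; ring
  -- q = taylor c (fallR n) = ∏ (X - C (i - c))
  set q : Polynomial ℝ := ∏ i ∈ Finset.range n, (X - C ((i : ℝ) - c)) with hq
  have htaylor : taylor c (fallR n) = q := by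
    rw [taylor_apply, fallR, Polynomial.prod_comp]
    refine Finset.prod_congr rfl fun i _ => ?_
    rw [sub_comp, X_comp, C_comp, C_sub]
    ring
  -- symmetry: q.comp (-X) = C ((-1)^n) * q
  have hsym : q.comp (-X) = C ((-1 : ℝ) ^ n) * q := by
    rw [hq, Polynomial.prod_comp]
    have h1 : ∀ i ∈ Finset.range n,
        (X - C ((i : ℝ) - c)).comp (-X) = (-1 : Polynomial ℝ) * (X - C (c - (i : ℝ))) := by
      intro i _
      rw [sub_comp, X_comp, C_comp,
        show ((i : ℝ) - c) = -(c - (i : ℝ)) by ring, C_neg]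
      ring
    rw [Finset.prod_congr rfl h1, Finset.prod_mul_distrib, Finset.prod_const,
      Finset.card_range]
    have h2 : ∏ i ∈ Finset.range n, (X - C (c - (i : ℝ))) = q := by
      rw [hq, ← Finset.prod_range_reflect (fun i => (X - C ((i : ℝ) - c)))]
      refine Finset.prod_congr rfl fun i hi => ?_
      rw [Finset.mem_range] at hi
      show X - C (c - (i : ℝ)) = X - C (((n - 1 - i : ℕ) : ℝ) - c)
      have hcast : ((n - 1 - i : ℕ) : ℝ) = (n : ℝ) - 1 - i := by
        push_cast [show i ≤ n - 1 by omega, show (1:ℕ) ≤ n by omega]; ring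
      have h3 : c - (i : ℝ) = ((n - 1 - i : ℕ) : ℝ) - c := by
        rw [hcast]; linarith [hc]
      rw [h3]
    rw [h2]
    have : (-1 : Polynomial ℝ) ^ n = C ((-1 : ℝ) ^ n) := by
      rw [← C_1, ← C_neg, ← C_pow]
    rw [this]
  -- coefficient m of q vanishes
  have hqm : q.coeff m = 0 := by
    have := congrArg (fun p => Polynomial.coeff p m) hsym
    simp only [coeff_comp_neg_X, coeff_C_mul] at this
    have hpar : (-1 : ℝ) ^ n = -(-1 : ℝ) ^ m := by
      rw [hnm, pow_add]
      have : (-1 : ℝ) ^ (2 * k - 1) = -1 := by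
        rw [show 2 * k - 1 = 2 * (k - 1) + 1 by omega, pow_succ, pow_mul]
        simp
      rw [this]; ring
    rw [hpar] at this
    have h2 : (-1 : ℝ) ^ m * q.coeff m = 0 := by linarith
    have hne : (-1 : ℝ) ^ m ≠ 0 := pow_ne_zero m (by norm_num)
    rcases mul_eq_zero.mp h2 with h | h
    · exact absurd h hne
    · exact h
  -- natDegree bound
  have hdeg : (hasseDeriv m (fallR n)).natDegree < 2 * k := by
    have h1 : (fallR n).natDegree ≤ n := by
      refine le_trans (Polynomial.natDegree_prod_le _ _) ?_
      have h2 : ∑ i ∈ Finset.range n, (X - C ((i : ℝ))).natDegree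
          ≤ ∑ _i ∈ Finset.range n, 1 :=
        Finset.sum_le_sum fun i _ => Polynomial.natDegree_X_sub_C_le _
      simpa using h2
    have := Polynomial.natDegree_hasseDeriv_le (fallR n) m
    omega
  -- put it together
  have heval : (hasseDeriv m (fallR n)).eval c = 0 := by
    rw [← taylor_coeff, htaylor, hqm]
  rw [Polynomial.eval_eq_sum_range' hdeg] at heval
  rw [← heval]
  refine Finset.sum_congr rfl fun ℓ _ => ?_
  rw [hasseDeriv_coeff, coeff_fallR]
  rw [show ℓ + m = m + ℓ by ring]

/-- The combinatorial identity `Q(m+1, 2k−1; 2) = 0`, i.e. explicitly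
`∑_{ℓ=0}^{2k−1} C(m+ℓ, m) s(m+2k−1, m+ℓ) ((m+2k−2)/2)^ℓ = 0`. -/
theorem Q_succ_odd_two_eq_zero (k m : ℕ) (hk : 1 ≤ k) (hm : 1 ≤ m) :
    Q (m + 1) (2 * k - 1) 2 = 0 ∧
      ∑ ℓ ∈ Finset.range (2 * k), ((m + ℓ).choose m : ℝ) *
        (stirlingFirst (m + 2 * k - 1) (m + ℓ) : ℝ) *
          (((m : ℝ) + 2 * (k : ℝ) - 2) / 2) ^ ℓ = 0 := by
  have hkey := key k m hk
  constructor
  · rw [Q]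
    rw [show 2 * k - 1 + 1 = 2 * k by omega]
    rw [← hkey]
    refine Finset.sum_congr rfl fun ℓ _ => ?_
    have e1 : m + 1 + ℓ - 1 = m + ℓ := by omega
    have e2 : m + 1 - 1 = m := by omega
    have e3 : m + 1 + (2 * k - 1) - 1 = m + 2 * k - 1 := by omega
    have e4 : (((m + 1 : ℕ) : ℝ) + ((2 * k - 1 : ℕ) : ℝ) - 2) / 2
        = ((m : ℝ) + 2 * (k : ℝ) - 2) / 2 := by
      push_cast [show (1:ℕ) ≤ 2 * k by omega]; ring
    rw [e1, e2, e3, e4]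
  · exact hkey
end

section
/- For every real number t with |t| < 1, one has the convergent Maclaurin series expansion e^{arcsinh t} = 1 + t − t² · Σ_{k=0}^∞ B((2k−1)/2, 2k+1) · (2t)^{2k}/(k+1), where B(z, n) = z(z−1)(z−2)⋯(z−n+1)/n! denotes the generalized binomial coefficient and arcsinh t = ln(t + √(1+t²)) is the inverse hyperbolic sine. -/
/-!
Since `e^{arsinh t} = t + √(1 + t²)`, the theorem is the binomial series
`√(1 + x) = ∑ B(1/2, n) xⁿ` at `x = t²`, once its constant term is split off and the
coefficients are identified: `B((2k-1)/2, 2k+1) 4ᵏ/(k+1) = -B(1/2, k+1)`. Both sides of this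
identity are hypergeometric in `k` with the same ratio `-(2k+1)/(2(k+2))`, so it follows by
induction.
-/

open Polynomial

theorem descPochhammer_succ_succ_eval_add_one {R : Type*} [CommRing R] (n : ℕ) (x : R) :
    (descPochhammer R (n + 2)).eval (x + 1) = (x + 1) * (descPochhammer R n).eval x * (x - n) := by
  rw [descPochhammer_succ_left, eval_mul, eval_X, eval_comp, eval_sub, eval_X, eval_one,
    add_sub_cancel_right, descPochhammer_succ_eval, mul_assoc]

theorem Ring.choose_eq_descPochhammer_eval_div {K : Type*} [Field K] [CharZero K] (a : K) (n : ℕ) :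
    Ring.choose a n = (descPochhammer K n).eval a / n.factorial := by
  rw [Ring.choose_eq_smul, ← aeval_eq_smeval, ← descPochhammer_map (algebraMap ℤ K),
    eval_map_algebraMap, smul_eq_mul, inv_mul_eq_div]

theorem descPochhammer_odd_eval_mul_factorial {K : Type*} [Field K] [CharZero K] (k : ℕ) :
    (descPochhammer K (2 * k + 1)).eval ((2 * (k : K) - 1) / 2) * 4 ^ k * (k + 1).factorial =
      -(descPochhammer K (k + 1)).eval (1 / 2) * (2 * k + 1).factorial * (k + 1) := by
  induction k with
  | zero => norm_num
  | succ k ih =>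
    have hstep : (descPochhammer K (2 * (k + 1) + 1)).eval ((2 * ((k + 1 : ℕ) : K) - 1) / 2) =
        (2 * k + 1) / 2 * (descPochhammer K (2 * k + 1)).eval ((2 * (k : K) - 1) / 2) *
          (-(2 * k + 3) / 2) := by
      rw [show 2 * (k + 1) + 1 = 2 * k + 1 + 2 by ring, show (2 * ((k + 1 : ℕ) : K) - 1) / 2 =
        (2 * k - 1) / 2 + 1 by push_cast; ring, descPochhammer_succ_succ_eval_add_one]
      push_cast
      ring
    rw [hstep, descPochhammer_succ_eval (k + 1) (1 / 2 : K),
      show 2 * (k + 1) + 1 = 2 * k + 1 + 1 + 1 by ring, Nat.factorial_succ (2 * k + 1 + 1),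
      Nat.factorial_succ (2 * k + 1), Nat.factorial_succ (k + 1)]
    push_cast
    linear_combination -(2 * (k : K) + 1) * (2 * k + 3) * (k + 2) * ih

theorem descPochhammer_odd_eval_div_factorial {K : Type*} [Field K] [CharZero K] (k : ℕ) :
    (descPochhammer K (2 * k + 1)).eval ((2 * (k : K) - 1) / 2) / (2 * k + 1).factorial * 4 ^ k /
      (k + 1) = -Ring.choose (1 / 2 : K) (k + 1) := by
  have h2k : ((2 * k + 1).factorial : K) ≠ 0 := Nat.cast_ne_zero.mpr (Nat.factorial_ne_zero _)
  have hk : ((k + 1).factorial : K) ≠ 0 := Nat.cast_ne_zero.mpr (Nat.factorial_ne_zero _)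
  rw [Ring.choose_eq_descPochhammer_eval_div]
  field_simp [Nat.cast_add_one_ne_zero k]
  linear_combination descPochhammer_odd_eval_mul_factorial (K := K) k

theorem Real.hasSum_choose_mul_pow (a : ℝ) {x : ℝ} (hx : |x| < 1) :
    HasSum (fun n ↦ Ring.choose a n * x ^ n) ((1 + x) ^ a) := by
  have := Real.one_add_rpow_hasFPowerSeriesOnBall_zero (a := a) |>.hasSum (y := x)
    (by simpa [enorm_eq_ofReal_abs] using hx)
  simpa [binomialSeries, FormalMultilinearSeries.coeff_ofScalars, mul_comm] using this

theorem HasSum.exists_hasSum_coeff_succ_mul_pow {𝕜 : Type*} [NormedField 𝕜] {c : ℕ → 𝕜}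
    {x s : 𝕜} (h : HasSum (fun n ↦ c n * x ^ n) s) :
    ∃ S, HasSum (fun n ↦ c (n + 1) * x ^ n) S ∧ s = c 0 + x * S := by
  rcases eq_or_ne x 0 with rfl | hx
  · have hsingle (d : ℕ → 𝕜) : HasSum (fun n ↦ d n * 0 ^ n) (d 0) := by
      convert hasSum_ite_eq 0 (d 0) with n
      rcases n with _ | n <;> simp
    exact ⟨c 1, hsingle (c ∘ (· + 1)), by simp [h.unique (hsingle c)]⟩
  · have hshift : HasSum (fun n ↦ c (n + 1) * x ^ (n + 1)) (s - c 0) := by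
      simpa using (hasSum_nat_add_iff' 1).mpr h
    refine ⟨x⁻¹ * (s - c 0), ?_, by field_simp; ring⟩
    have hterm (n : ℕ) : c (n + 1) * x ^ n = x⁻¹ * (c (n + 1) * x ^ (n + 1)) := by
      rw [pow_succ]
      field_simp
    simpa only [← hterm] using hshift.mul_left x⁻¹

/-- Maclaurin series for `e^{arcsinh t}`:
`e^{arcsinh t} = 1 + t − t² ∑_{k=0}^∞ B((2k−1)/2, 2k+1) (2t)^{2k}/(k+1)`,
where `B(z,n) = z(z−1)⋯(z−n+1)/n!` is the generalized binomial coefficient. -/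
theorem exp_arsinh_maclaurin (t : ℝ) (ht : |t| < 1) :
    ∃ S : ℝ,
      HasSum (fun k : ℕ =>
        (descPochhammer ℝ (2 * k + 1)).eval ((2 * (k : ℝ) - 1) / 2) /
            ((2 * k + 1).factorial : ℝ) * (2 * t) ^ (2 * k) / ((k : ℝ) + 1)) S ∧
      Real.exp (Real.arsinh t) = 1 + t - t ^ 2 * S := by
  have ht2 : |t ^ 2| < 1 := by rwa [abs_pow, sq_lt_one_iff₀ (abs_nonneg t)]
  obtain ⟨S, hS, hsqrt⟩ :=
    (Real.hasSum_choose_mul_pow (1 / 2) ht2).exists_hasSum_coeff_succ_mul_pow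
  refine ⟨-S, ?_, ?_⟩
  · have hterm (k : ℕ) : (descPochhammer ℝ (2 * k + 1)).eval ((2 * (k : ℝ) - 1) / 2) /
        ((2 * k + 1).factorial : ℝ) * (2 * t) ^ (2 * k) / ((k : ℝ) + 1) =
          -(Ring.choose (1 / 2 : ℝ) (k + 1) * (t ^ 2) ^ k) := by
      rw [← neg_mul, ← descPochhammer_odd_eval_div_factorial, pow_mul, mul_pow]
      ring
    simpa only [hterm] using hS.neg
  · rw [Real.exp_arsinh, Real.sqrt_eq_rpow, hsqrt, Ring.choose_zero_right]
    ring
end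

section
/- For every integer m ≥ 3 and every real number t with |t| < 1, one has the convergent expansion Γ(1+m, arcsinh t) = m! − (m!/2^{m+1}) Σ_{k=m}^∞ Q(m+1, k−m; 3) (2t)^{k+1}/(k+1)!, where Γ(a, x) = ∫_x^∞ e^{−u} u^{a−1} du is the upper incomplete gamma function and arcsinh t = ln(t + √(1+t²)) is the inverse hyperbolic sine. -/
/-- The upper incomplete gamma function `Γ(a, x) = ∫_x^∞ e^{−u} u^{a−1} du`
(for a positive integer value of the parameter `a`). -/
noncomputable def incGamma (a : ℕ) (x : ℝ) : ℝ :=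
  ∫ u in Set.Ioi x, Real.exp (-u) * u ^ (a - 1)

/-!
Write `A n = scaledPochhammer n = ∏_{i<n} (X + n - 2 - 2i) = 2ⁿ sₙ((X + n - 2)/2)`, where `sₙ` is
the falling factorial. Taylor-expanding `sₘ₊ₖ` at `(m + k - 2)/2` shows that the coefficient of
`Xᵐ` in `A (m + k)` is `2ᵏ Q(m+1, k; 3)`, and `A (n + 2) = (X² - 2X - n(n+2)) A n`.

Behind the proof is the generating function `∑ₙ A n (x) tⁿ/n! = e^{x a} e^{-a}/√(1+t²)` with
`a = arsinh t`. Comparing coefficients of `xʲ/j!`, the series `Fⱼ(t) = ∑ₙ j! [xʲ] A n · tⁿ/n!`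
should equal `gⱼ(t) = e^{-a} aʲ/√(1+t²)`. We prove this on `(-1, 1)` by strong induction on `j`:
with `L = (1+t²) ∂² + 3t ∂`, the recurrence for `A` gives `L Fⱼ = j(j-1) Fⱼ₋₂ - 2j Fⱼ₋₁`, the
function `gⱼ` satisfies the same equation, and `L y = 0`, `y(0) = y'(0) = 0` force `y = 0` since
`(√(1+t²)³ y')' = √(1+t²) L y`. The coefficients of `A n` are bounded by `(n+1)!`, so all series
involved converge on `(-1, 1)`.

Finally `gₘ` is the derivative of `t ↦ ∫₀^{arsinh t} e^{-s} sᵐ ds = m! - Γ(1+m, arsinh t)`, so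
integrating `Fₘ` termwise gives the expansion.
-/

open Polynomial Real Set

section ScaledPochhammer

open Finset

theorem descPochhammer_eq_prod_range (R : Type*) [CommRing R] (n : ℕ) :
    descPochhammer R n = ∏ i ∈ range n, (X - C (i : R)) := by
  induction n with
  | zero => simp
  | succ n ih => rw [descPochhammer_succ_right, ih, prod_range_succ, ← map_natCast C]

theorem coeff_descPochhammer_eq_stirlingFirst (R : Type*) [Ring R] (n j : ℕ) :
    (descPochhammer R n).coeff j = stirlingFirst n j := by
  induction n generalizing j with
  | zero => cases j <;> simp [stirlingFirst, coeff_one]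
  | succ n ih =>
    rw [descPochhammer_succ_right, mul_sub, ← Nat.cast_comm, ← C_eq_natCast, coeff_sub, coeff_C_mul]
    cases j with
    | zero => simp [ih, stirlingFirst]
    | succ j => simp [coeff_mul_X, ih, stirlingFirst]

noncomputable def scaledPochhammer (n : ℕ) : ℝ[X] :=
  ∏ i ∈ range n, (X + C ((n : ℝ) - 2 - 2 * i))

theorem scaledPochhammer_eq_comp (n : ℕ) :
    scaledPochhammer n =
      C (2 ^ n) * (descPochhammer ℝ n).comp (C (1 / 2) * X + C (((n : ℝ) - 2) / 2)) := by
  have h2 : C ((2 : ℝ) ^ n) = ∏ _i ∈ range n, C 2 := by simp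
  rw [scaledPochhammer, descPochhammer_eq_prod_range, Polynomial.prod_comp, h2, ← prod_mul_distrib]
  refine prod_congr rfl fun i _ => ?_
  simp only [sub_comp, X_comp, C_comp, mul_sub, mul_add, ← mul_assoc, ← C_mul, add_sub_assoc,
    ← C_sub]
  congr 2
  · norm_num
  · ring

theorem coeff_C_mul_comp_C_mul_X_add_C {R : Type*} [CommRing R] (p : R[X]) (c a b : R) (m : ℕ) :
    (C c * p.comp (C a * X + C b)).coeff m = c * a ^ m * (hasseDeriv m p).eval b := by
  have : p.comp (C a * X + C b) = (taylor b p).comp (C a * X) := by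
    rw [taylor_apply, comp_assoc, add_comp, X_comp, C_comp]
  rw [coeff_C_mul, this, comp_C_mul_X_coeff, taylor_coeff]
  ring

theorem coeff_scaledPochhammer_eq_Q (m k : ℕ) :
    (scaledPochhammer (m + k)).coeff m = Q (m + 1) k 3 * 2 ^ k := by
  have hdeg : (hasseDeriv m (descPochhammer ℝ (m + k))).natDegree < k + 1 := by
    have := natDegree_hasseDeriv_le (descPochhammer ℝ (m + k)) m
    simp only [descPochhammer_natDegree] at this
    omega
  rw [scaledPochhammer_eq_comp, coeff_C_mul_comp_C_mul_X_add_C, eval_eq_sum_range' hdeg, Q,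
    mul_comm _ (2 ^ k), mul_sum, mul_sum]
  refine sum_congr rfl fun l _ => ?_
  rw [hasseDeriv_coeff, coeff_descPochhammer_eq_stirlingFirst, show m + 1 + l - 1 = l + m by omega,
    show m + 1 - 1 = m by omega, show m + 1 + k - 1 = m + k by omega]
  rw [pow_add, one_div, inv_pow]
  field_simp
  push_cast
  ring

theorem scaledPochhammer_add_two (n : ℕ) :
    scaledPochhammer (n + 2) =
      scaledPochhammer n * X ^ 2 - C 2 * (scaledPochhammer n * X)
        - C ((n : ℝ) * (n + 2)) * scaledPochhammer n := by
  have hsplit : scaledPochhammer (n + 2) =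
      scaledPochhammer n * (X + C (n : ℝ)) * (X - C ((n : ℝ) + 2)) := by
    unfold scaledPochhammer
    rw [prod_range_succ, prod_range_succ', sub_eq_add_neg X, ← C_neg]
    push_cast
    congr 3
    · funext i
      ring_nf
    all_goals ring_nf
  rw [hsplit]
  simp only [C_mul, C_add, map_natCast, map_ofNat]
  ring

theorem natDegree_scaledPochhammer_le (n : ℕ) : (scaledPochhammer n).natDegree ≤ n :=
  (natDegree_prod_le _ _).trans <| by
    simp only [natDegree_X_add_C, sum_const, card_range, smul_eq_mul, mul_one, le_refl]

theorem abs_coeff_mul_X_pow_le {p : ℝ[X]} {M : ℝ} (hM : 0 ≤ M) (hp : ∀ j, |p.coeff j| ≤ M)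
    (k j : ℕ) :
    |(p * X ^ k).coeff j| ≤ M := by
  rw [coeff_mul_X_pow']
  split_ifs
  exacts [hp _, by simpa using hM]

theorem abs_coeff_scaledPochhammer_le : ∀ n j, |(scaledPochhammer n).coeff j| ≤ (n + 1).factorial
  | 0, j => by
    rw [scaledPochhammer, prod_range_zero, coeff_one]
    split_ifs <;> simp
  | 1, j => by
    rw [scaledPochhammer, prod_range_one]
    rcases j with _ | _ | j <;> norm_num [coeff_X, coeff_C, coeff_one]
  | n + 2, j => by
    have ih := abs_coeff_scaledPochhammer_le n
    have hM : (0 : ℝ) ≤ (n + 1).factorial := by positivity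
    have h2 := abs_coeff_mul_X_pow_le hM ih 2 j
    have h1 := abs_coeff_mul_X_pow_le hM ih 1 j
    rw [pow_one] at h1
    rw [scaledPochhammer_add_two, coeff_sub, coeff_sub, coeff_C_mul, coeff_C_mul]
    calc _ ≤ |(scaledPochhammer n * X ^ 2).coeff j| + |2 * (scaledPochhammer n * X).coeff j|
          + |(n * (n + 2) : ℝ) * (scaledPochhammer n).coeff j| :=
          (abs_sub _ _).trans (by gcongr; exact abs_sub _ _)
      _ = |(scaledPochhammer n * X ^ 2).coeff j| + 2 * |(scaledPochhammer n * X).coeff j|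
          + n * (n + 2) * |(scaledPochhammer n).coeff j| := by
          rw [abs_mul, abs_mul, abs_two, abs_of_nonneg (by positivity : (0 : ℝ) ≤ n * (n + 2))]
      _ ≤ (n + 1).factorial + 2 * (n + 1).factorial + n * (n + 2) * (n + 1).factorial := by
          gcongr; exact ih j
      _ ≤ (n + 2 + 1).factorial := by
          simp only [Nat.factorial_succ (n + 2), Nat.factorial_succ (n + 1)]
          push_cast
          nlinarith

end ScaledPochhammer

theorem factorial_mul_coeff_mul_X {R : Type*} [CommRing R] (p : R[X]) (j : ℕ) :
    (j.factorial : R) * (p * X).coeff j = j * ((j - 1).factorial * p.coeff (j - 1)) := by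
  cases j with
  | zero => simp
  | succ j =>
    simp only [coeff_mul_X, Nat.factorial_succ, Nat.add_sub_cancel]
    push_cast
    ring

noncomputable def egfCoeff (j n : ℕ) : ℝ := j.factorial * (scaledPochhammer n).coeff j / n.factorial

-- For `j < 2` the truncated indices `j - 1`, `j - 2` are harmless: their coefficients vanish.
theorem egfCoeff_add_two (j n : ℕ) :
    (n + 2) * (n + 1) * egfCoeff j (n + 2) =
      j * (j - 1) * egfCoeff (j - 2) n - 2 * j * egfCoeff (j - 1) n
        - n * (n + 2) * egfCoeff j n := by
  have h1 := factorial_mul_coeff_mul_X (scaledPochhammer n * X) j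
  have h2 := factorial_mul_coeff_mul_X (scaledPochhammer n) (j - 1)
  have h0 := factorial_mul_coeff_mul_X (scaledPochhammer n) j
  have hj : (j : ℝ) * ((j - 1 : ℕ) : ℝ) = j * (j - 1) := by
    rcases j with _ | j <;> simp
  rw [show j - 1 - 1 = j - 2 by omega] at h2
  have hL : (n + 2) * (n + 1) * egfCoeff j (n + 2) =
      j.factorial * (scaledPochhammer (n + 2)).coeff j / n.factorial := by
    rw [egfCoeff, Nat.factorial_succ (n + 1), Nat.factorial_succ n]
    push_cast
    field_simp
    ring
  rw [hL, scaledPochhammer_add_two, coeff_sub, coeff_sub, coeff_C_mul, coeff_C_mul, pow_two,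
    ← mul_assoc]
  unfold egfCoeff
  field_simp
  linear_combination h1 + j * h2 - 2 * h0
    + hj * (((j - 2).factorial : ℝ) * (scaledPochhammer n).coeff (j - 2))

theorem abs_egfCoeff_le (j n : ℕ) : |egfCoeff j n| ≤ j.factorial * ((n : ℝ) + 1) := by
  rw [egfCoeff, abs_div, abs_mul, Nat.abs_cast, Nat.abs_cast, div_le_iff₀ (by positivity)]
  calc (j.factorial : ℝ) * |(scaledPochhammer n).coeff j|
      ≤ j.factorial * (n + 1).factorial := by gcongr; exact abs_coeff_scaledPochhammer_le n j
    _ = j.factorial * ((n : ℝ) + 1) * n.factorial := by push_cast [Nat.factorial_succ]; ring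

theorem egfCoeff_zero_right (j : ℕ) : egfCoeff j 0 = 0 ^ j := by
  rcases j with _ | j <;> simp [egfCoeff, scaledPochhammer, coeff_one]

theorem egfCoeff_one_right (j : ℕ) : egfCoeff j 1 = j * 0 ^ (j - 1) - 0 ^ j := by
  rcases j with _ | _ | j <;> norm_num [egfCoeff, scaledPochhammer, coeff_X, coeff_C, coeff_one]

theorem egfCoeff_eq_zero_of_lt {j n : ℕ} (h : n < j) : egfCoeff j n = 0 := by
  rw [egfCoeff, coeff_eq_zero_of_natDegree_lt ((natDegree_scaledPochhammer_le n).trans_lt h)]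
  simp

theorem hasDerivAt_sqrt_one_add_sq (t : ℝ) :
    HasDerivAt (fun t => √(1 + t ^ 2)) (t / √(1 + t ^ 2)) t := by
  have h := ((hasDerivAt_pow 2 t).const_add 1).sqrt (by positivity)
  refine h.congr_deriv ?_
  field_simp
  norm_num

theorem eqOn_of_hasDerivAt {𝕜 G : Type*} [RCLike 𝕜] [NormedAddCommGroup G] [NormedSpace 𝕜 G]
    {s : Set 𝕜} (hs : IsOpen s) (hs' : IsPreconnected s) {f g : 𝕜 → G} {f' : 𝕜 → G}
    (hf : ∀ x ∈ s, HasDerivAt f (f' x) x) (hg : ∀ x ∈ s, HasDerivAt g (f' x) x) {x₀ : 𝕜}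
    (hx₀ : x₀ ∈ s) (h : f x₀ = g x₀) : EqOn f g s :=
  hs.eqOn_of_deriv_eq hs' (fun x hx => (hf x hx).differentiableAt.differentiableWithinAt)
    (fun x hx => (hg x hx).differentiableAt.differentiableWithinAt)
    (fun x hx => (hf x hx).deriv.trans (hg x hx).deriv.symm) hx₀ h

theorem tsum_mul_zero_pow (b : ℕ → ℝ) : ∑' n, b n * 0 ^ n = b 0 := by
  rw [tsum_eq_single 0 fun n hn => by simp [hn]]
  simp

def PolyBounded (b : ℕ → ℝ) : Prop :=
  ∃ (C : ℝ) (p : ℕ), ∀ n, |b n| ≤ C * ((n : ℝ) + 1) ^ p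

def seriesDeriv (b : ℕ → ℝ) (n : ℕ) : ℝ := (n + 1) * b (n + 1)

namespace PolyBounded

variable {b : ℕ → ℝ}

theorem comp_add_one (hb : PolyBounded b) : PolyBounded fun n => b (n + 1) := by
  obtain ⟨C, p, h⟩ := hb
  refine ⟨C * 2 ^ p, p, fun n => (h (n + 1)).trans ?_⟩
  have hC : 0 ≤ C := nonneg_of_mul_nonneg_left ((abs_nonneg _).trans (h 0)) (by positivity)
  rw [mul_assoc, ← mul_pow]
  gcongr
  push_cast
  linarith [(n.cast_nonneg : (0 : ℝ) ≤ n)]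

theorem natCast_add_mul (c : ℝ) (hb : PolyBounded b) :
    PolyBounded fun n => ((n : ℝ) + c) * b n := by
  obtain ⟨C, p, h⟩ := hb
  refine ⟨(1 + |c|) * C, p + 1, fun n => ?_⟩
  have hn : |(n : ℝ) + c| ≤ (1 + |c|) * ((n : ℝ) + 1) := by
    have := abs_add_le (n : ℝ) c
    rw [Nat.abs_cast] at this
    nlinarith [abs_nonneg c, (n.cast_nonneg : (0 : ℝ) ≤ n)]
  rw [abs_mul, pow_succ]
  calc |(n : ℝ) + c| * |b n| ≤ (1 + |c|) * ((n : ℝ) + 1) * (C * ((n : ℝ) + 1) ^ p) :=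
        mul_le_mul hn (h n) (abs_nonneg _) (by positivity)
    _ = _ := by ring

theorem seriesDeriv (hb : PolyBounded b) : PolyBounded (_root_.seriesDeriv b) :=
  hb.comp_add_one.natCast_add_mul 1

theorem summable_abs_mul_pow (hb : PolyBounded b) {r : ℝ} (hr : |r| < 1) :
    Summable fun n => |b n| * |r| ^ n := by
  obtain ⟨C, p, h⟩ := hb
  have hC : 0 ≤ C := nonneg_of_mul_nonneg_left ((abs_nonneg _).trans (h 0)) (by positivity)
  have hr' : ‖|r|‖ < 1 := by rwa [Real.norm_eq_abs, abs_abs]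
  refine Summable.of_nonneg_of_le (fun n => by positivity) (fun n => ?_)
    ((summable_descFactorial_mul_geometric_of_norm_lt_one p hr').mul_left C)
  calc |b n| * |r| ^ n ≤ C * ((n : ℝ) + 1) ^ p * |r| ^ n := by gcongr; exact h n
    _ ≤ C * ((n + p).descFactorial p * |r| ^ n) := by
        rw [mul_assoc]
        gcongr
        have := Nat.pow_sub_le_descFactorial (n + p) p
        rw [show n + p + 1 - p = n + 1 by omega] at this
        exact_mod_cast this

theorem summable_mul_pow (hb : PolyBounded b) {y : ℝ} (hy : |y| < 1) :
    Summable fun n => b n * y ^ n :=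
  .of_norm <| by simpa [abs_mul, abs_pow] using hb.summable_abs_mul_pow hy

theorem hasDerivAt_tsum_div_succ_mul_pow (hb : PolyBounded b) {y : ℝ} (hy : |y| < 1) :
    HasDerivAt (fun z => ∑' n, b n / (n + 1) * z ^ (n + 1)) (∑' n, b n * y ^ n) y := by
  obtain ⟨r, hyr, hr1⟩ := exists_between hy
  have hr0 : 0 < r := (abs_nonneg y).trans_lt hyr
  have hr : |r| < 1 := by rwa [abs_of_pos hr0]
  refine hasDerivAt_tsum_of_isPreconnected (g := fun n z => b n / (n + 1) * z ^ (n + 1))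
    (g' := fun n z => b n * z ^ n)
    (hb.summable_abs_mul_pow hr) isOpen_Ioo isPreconnected_Ioo (fun n z _ => ?_) (fun n z hz => ?_)
    (y₀ := 0) ⟨neg_lt_zero.mpr hr0, hr0⟩ (by simp) (abs_lt.mp hyr)
  · refine ((hasDerivAt_pow (n + 1) z).const_mul (b n / (n + 1))).congr_deriv ?_
    rw [Nat.add_sub_cancel]
    push_cast
    field_simp
  · rw [norm_mul, norm_pow, Real.norm_eq_abs, Real.norm_eq_abs]
    exact mul_le_mul_of_nonneg_left (pow_le_pow_left₀ (abs_nonneg _)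
      ((abs_le.mpr ⟨hz.1.le, hz.2.le⟩).trans (le_abs_self r)) n) (abs_nonneg _)

theorem hasDerivAt_tsum_mul_pow (hb : PolyBounded b) {y : ℝ} (hy : |y| < 1) :
    HasDerivAt (fun z => ∑' n, b n * z ^ n) (∑' n, _root_.seriesDeriv b n * y ^ n) y := by
  refine ((hb.seriesDeriv.hasDerivAt_tsum_div_succ_mul_pow hy).const_add (b 0))
    |>.congr_of_eventuallyEq ?_
  filter_upwards [(isOpen_lt continuous_abs continuous_const).mem_nhds hy] with z hz
  rw [(hb.summable_mul_pow hz).tsum_eq_zero_add]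
  simp [_root_.seriesDeriv, Nat.cast_add_one_ne_zero]

theorem mul_tsum_seriesDeriv_mul_pow (hb : PolyBounded b) {y : ℝ} (hy : |y| < 1) :
    y * ∑' n, _root_.seriesDeriv b n * y ^ n = ∑' n, n * b n * y ^ n := by
  have h n :
      y * (_root_.seriesDeriv b n * y ^ n) = ((n + 1 : ℕ) : ℝ) * b (n + 1) * y ^ (n + 1) := by
    rw [_root_.seriesDeriv]
    push_cast
    ring
  rw [tsum_eq_zero_add' (f := fun n : ℕ => (n : ℝ) * b n * y ^ n)
    (((hb.seriesDeriv.summable_mul_pow hy).mul_left y).congr h), ← tsum_mul_left]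
  simp only [h, Nat.cast_zero, zero_mul, zero_add]

theorem tsum_ode (hb : PolyBounded b) {y : ℝ} (hy : |y| < 1) :
    (1 + y ^ 2) * ∑' n, _root_.seriesDeriv (_root_.seriesDeriv b) n * y ^ n
        + 3 * y * ∑' n, _root_.seriesDeriv b n * y ^ n =
      ∑' n : ℕ, ((n + 2) * (n + 1) * b (n + 2) + n * (n + 2) * b n) * y ^ n := by
  have hb₁ : PolyBounded fun n => ((n : ℝ) + -1) * b n := hb.natCast_add_mul (-1)
  have e1 := hb.seriesDeriv.mul_tsum_seriesDeriv_mul_pow hy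
  have e2 : ∑' n : ℕ, (n : ℝ) * _root_.seriesDeriv b n * y ^ n =
      ∑' n, _root_.seriesDeriv (fun k => ((k : ℝ) + -1) * b k) n * y ^ n :=
    tsum_congr fun n => by simp only [_root_.seriesDeriv]; push_cast; ring
  have e3 := hb₁.mul_tsum_seriesDeriv_mul_pow hy
  have e4 := hb.mul_tsum_seriesDeriv_mul_pow hy
  have s1 := hb.seriesDeriv.seriesDeriv.summable_mul_pow hy
  have s2 := (hb₁.natCast_add_mul 0).summable_mul_pow hy
  have s3 := (hb.natCast_add_mul 0).summable_mul_pow hy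
  simp only [add_zero] at s2 s3
  calc _ = ∑' n, _root_.seriesDeriv (_root_.seriesDeriv b) n * y ^ n
          + y * (y * ∑' n, _root_.seriesDeriv (_root_.seriesDeriv b) n * y ^ n)
          + 3 * (y * ∑' n, _root_.seriesDeriv b n * y ^ n) := by ring
    _ = _ := by
      rw [e1, e2, e3, e4, ← tsum_mul_left, ← s1.tsum_add s2, ← (s1.add s2).tsum_add (s3.mul_left 3)]
      refine tsum_congr fun n => ?_
      simp only [_root_.seriesDeriv]
      push_cast
      ring

theorem hasDerivAt_sqrt_cube_mul_tsum_seriesDeriv (hb : PolyBounded b) {y : ℝ} (hy : |y| < 1) :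
    HasDerivAt (fun t => √(1 + t ^ 2) ^ 3 * ∑' n, _root_.seriesDeriv b n * t ^ n)
      (√(1 + y ^ 2) * ((1 + y ^ 2) * ∑' n, _root_.seriesDeriv (_root_.seriesDeriv b) n * y ^ n
        + 3 * y * ∑' n, _root_.seriesDeriv b n * y ^ n)) y := by
  have hr : √(1 + y ^ 2) ≠ 0 := by positivity
  have hr2 : √(1 + y ^ 2) ^ 2 = 1 + y ^ 2 := sq_sqrt (by positivity)
  refine (((hasDerivAt_sqrt_one_add_sq y).pow 3).mul
    (hb.seriesDeriv.hasDerivAt_tsum_mul_pow hy)).congr_deriv ?_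
  simp only [Pi.pow_apply]
  field_simp
  linear_combination
    (√(1 + y ^ 2) ^ 2 * ∑' n, _root_.seriesDeriv (_root_.seriesDeriv b) n * y ^ n) * hr2

end PolyBounded

noncomputable def arsinhIntegrand (j : ℕ) (t : ℝ) : ℝ :=
  exp (-arsinh t) * arsinh t ^ j / √(1 + t ^ 2)

noncomputable def arsinhIntegrandDeriv (j : ℕ) (t : ℝ) : ℝ :=
  exp (-arsinh t) * ((j * arsinh t ^ (j - 1) - arsinh t ^ j) * √(1 + t ^ 2) - t * arsinh t ^ j) /
    √(1 + t ^ 2) ^ 3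

theorem hasDerivAt_integral_arsinh (j : ℕ) (t : ℝ) :
    HasDerivAt (fun t => ∫ s in (0 : ℝ)..arsinh t, exp (-s) * s ^ j) (arsinhIntegrand j t) t := by
  have hcont : Continuous fun s : ℝ => exp (-s) * s ^ j := by fun_prop
  refine ((hcont.integral_hasStrictDerivAt 0 (arsinh t)).hasDerivAt.comp t
    (hasDerivAt_arsinh t)).congr_deriv ?_
  simp [arsinhIntegrand, div_eq_mul_inv]

theorem hasDerivAt_exp_neg_arsinh_mul_pow (j : ℕ) (t : ℝ) :
    HasDerivAt (fun t => exp (-arsinh t) * arsinh t ^ j)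
      (exp (-arsinh t) * (j * arsinh t ^ (j - 1) - arsinh t ^ j) / √(1 + t ^ 2)) t := by
  have h := ((hasDerivAt_arsinh t).neg.exp).mul ((hasDerivAt_arsinh t).pow j)
  refine h.congr_deriv ?_
  simp only [Pi.pow_apply, Pi.neg_apply]
  ring

theorem hasDerivAt_arsinhIntegrand (j : ℕ) (t : ℝ) :
    HasDerivAt (arsinhIntegrand j) (arsinhIntegrandDeriv j t) t := by
  have hr : √(1 + t ^ 2) ≠ 0 := by positivity
  refine ((hasDerivAt_exp_neg_arsinh_mul_pow j t).div (hasDerivAt_sqrt_one_add_sq t) hr)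
    |>.congr_deriv ?_
  rw [arsinhIntegrandDeriv]
  field_simp

theorem hasDerivAt_sqrt_cube_mul_arsinhIntegrandDeriv (j : ℕ) (t : ℝ) :
    HasDerivAt (fun t => √(1 + t ^ 2) ^ 3 * arsinhIntegrandDeriv j t)
      (√(1 + t ^ 2) * (j * (j - 1) * arsinhIntegrand (j - 2) t
        - 2 * j * arsinhIntegrand (j - 1) t)) t := by
  have heq : (fun t => √(1 + t ^ 2) ^ 3 * arsinhIntegrandDeriv j t) = fun t =>
      (j * (exp (-arsinh t) * arsinh t ^ (j - 1)) - exp (-arsinh t) * arsinh t ^ j) * √(1 + t ^ 2)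
        - t * (exp (-arsinh t) * arsinh t ^ j) := by
    funext t
    have hr : √(1 + t ^ 2) ≠ 0 := by positivity
    rw [arsinhIntegrandDeriv]
    field_simp
  have hr : √(1 + t ^ 2) ≠ 0 := by positivity
  have hjc : (j : ℝ) * ((j - 1 : ℕ) : ℝ) = j * (j - 1) := by rcases j with _ | j <;> simp
  rw [heq]
  refine ((((hasDerivAt_exp_neg_arsinh_mul_pow (j - 1) t).const_mul (j : ℝ)).sub
    (hasDerivAt_exp_neg_arsinh_mul_pow j t)).mul (hasDerivAt_sqrt_one_add_sq t)).sub
    ((hasDerivAt_id t).mul (hasDerivAt_exp_neg_arsinh_mul_pow j t)) |>.congr_deriv ?_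
  simp only [arsinhIntegrand, Pi.sub_apply, id, Nat.sub_sub, show 1 + 1 = 2 from rfl]
  field_simp
  linear_combination (√(1 + t ^ 2) * arsinh t ^ (j - 2)) * hjc

theorem polyBounded_egfCoeff (j : ℕ) : PolyBounded (egfCoeff j) :=
  ⟨j.factorial, 1, fun n => by simpa using abs_egfCoeff_le j n⟩

theorem tsum_egfCoeff_ode (j : ℕ) {y : ℝ} (hy : |y| < 1) :
    (1 + y ^ 2) * ∑' n, seriesDeriv (seriesDeriv (egfCoeff j)) n * y ^ n
        + 3 * y * ∑' n, seriesDeriv (egfCoeff j) n * y ^ n =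
      j * (j - 1) * ∑' n, egfCoeff (j - 2) n * y ^ n
        - 2 * j * ∑' n, egfCoeff (j - 1) n * y ^ n := by
  rw [(polyBounded_egfCoeff j).tsum_ode hy, ← tsum_mul_left, ← tsum_mul_left,
    ← ((polyBounded_egfCoeff _).summable_mul_pow hy).mul_left _ |>.tsum_sub
      (((polyBounded_egfCoeff _).summable_mul_pow hy).mul_left _)]
  refine tsum_congr fun n => ?_
  linear_combination y ^ n * egfCoeff_add_two j n

theorem eqOn_tsum_egfCoeff (j : ℕ) :
    EqOn (fun t => ∑' n, egfCoeff j n * t ^ n) (arsinhIntegrand j) (Ioo (-1) 1) := by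
  induction j using Nat.strong_induction_on with
  | _ j ih =>
  have h0 : (0 : ℝ) ∈ Ioo (-1) 1 := by norm_num
  have hc := polyBounded_egfCoeff j
  have hlow : ∀ t ∈ Ioo (-1 : ℝ) 1,
      j * (j - 1) * ∑' n, egfCoeff (j - 2) n * t ^ n - 2 * j * ∑' n, egfCoeff (j - 1) n * t ^ n =
        j * (j - 1) * arsinhIntegrand (j - 2) t - 2 * j * arsinhIntegrand (j - 1) t := by
    intro t ht
    rcases j with _ | _ | j
    · simp
    · simp [ih 0 one_pos ht]
    · have h1 : ∑' n, egfCoeff j n * t ^ n = arsinhIntegrand j t := ih j (by omega) ht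
      have h2 : ∑' n, egfCoeff (j + 1) n * t ^ n = arsinhIntegrand (j + 1) t :=
        ih (j + 1) (by omega) ht
      simp only [show j + 1 + 1 - 2 = j by omega, show j + 1 + 1 - 1 = j + 1 by omega, h1, h2]
  have hderiv : EqOn (fun t => √(1 + t ^ 2) ^ 3 * ∑' n, seriesDeriv (egfCoeff j) n * t ^ n)
      (fun t => √(1 + t ^ 2) ^ 3 * arsinhIntegrandDeriv j t) (Ioo (-1) 1) := by
    refine eqOn_of_hasDerivAt isOpen_Ioo isPreconnected_Ioo (fun t ht => ?_)
      (fun t _ => hasDerivAt_sqrt_cube_mul_arsinhIntegrandDeriv j t) h0 ?_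
    · refine (hc.hasDerivAt_sqrt_cube_mul_tsum_seriesDeriv (abs_lt.mpr ht)).congr_deriv ?_
      rw [tsum_egfCoeff_ode j (abs_lt.mpr ht), hlow t ht]
    · simp [tsum_mul_zero_pow, seriesDeriv, arsinhIntegrandDeriv, egfCoeff_one_right]
  refine eqOn_of_hasDerivAt isOpen_Ioo isPreconnected_Ioo (fun t ht => ?_)
    (fun t _ => hasDerivAt_arsinhIntegrand j t) h0 ?_
  · refine (hc.hasDerivAt_tsum_mul_pow (abs_lt.mpr ht)).congr_deriv ?_
    exact mul_left_cancel₀ (by positivity) (hderiv ht)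
  · simp [tsum_mul_zero_pow, arsinhIntegrand, egfCoeff_zero_right]

theorem incGamma_one_add (m : ℕ) (x : ℝ) :
    incGamma (1 + m) x = m.factorial - ∫ u in (0 : ℝ)..x, exp (-u) * u ^ m := by
  have hcont : Continuous fun u : ℝ => exp (-u) * u ^ m := by fun_prop
  have hint : MeasureTheory.IntegrableOn (fun u : ℝ => exp (-u) * u ^ m) (Ioi 0) := by
    simpa using GammaIntegral_convergent (s := m + 1) (by positivity)
  have hval : ∫ u in Ioi (0 : ℝ), exp (-u) * u ^ m = m.factorial := by
    simpa using
      (Gamma_eq_integral (s := m + 1) (by positivity)).symm.trans (Gamma_nat_eq_factorial m)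
  rw [incGamma, Nat.add_sub_cancel_left, ← hval,
    ← intervalIntegral.integral_interval_add_Ioi' (hcont.intervalIntegrable x 0) hint,
    intervalIntegral.integral_symm]
  ring

theorem hasSum_Q_mul_pow (m : ℕ) {t : ℝ} (ht : |t| < 1) :
    HasSum (fun k => Q (m + 1) k 3 * (2 * t) ^ (k + m + 1) / (k + m + 1).factorial)
      (2 ^ (m + 1) / m.factorial * ∫ s in (0 : ℝ)..arsinh t, exp (-s) * s ^ m) := by
  have hc := polyBounded_egfCoeff m
  have hint : ∫ s in (0 : ℝ)..arsinh t, exp (-s) * s ^ m =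
      ∑' n, egfCoeff m n / (n + 1) * t ^ (n + 1) := by
    refine eqOn_of_hasDerivAt (f := fun y => ∫ s in (0 : ℝ)..arsinh y, exp (-s) * s ^ m)
      (g := fun y => ∑' n, egfCoeff m n / (n + 1) * y ^ (n + 1)) isOpen_Ioo isPreconnected_Ioo
      (fun y _ => hasDerivAt_integral_arsinh m y) (fun y hy => ?_)
      (by norm_num : (0 : ℝ) ∈ Ioo (-1) 1) (by simp) (abs_lt.mp ht)
    exact (hc.hasDerivAt_tsum_div_succ_mul_pow (abs_lt.mpr hy)).congr_deriv
      (eqOn_tsum_egfCoeff m hy)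
  have hsum : Summable fun n => egfCoeff m n / (n + 1) * t ^ (n + 1) := by
    refine .of_norm_bounded (hc.summable_abs_mul_pow ht) fun n => ?_
    rw [norm_mul, norm_div, norm_pow, Real.norm_eq_abs, Real.norm_eq_abs, Real.norm_eq_abs,
      pow_succ, abs_of_pos (by positivity : (0 : ℝ) < n + 1)]
    have h1 : |t| ≤ 1 := ht.le
    have h2 : (1 : ℝ) ≤ n + 1 := by linarith [(n.cast_nonneg : (0 : ℝ) ≤ n)]
    calc |egfCoeff m n| / (n + 1) * (|t| ^ n * |t|) ≤ |egfCoeff m n| / 1 * (|t| ^ n * 1) := by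
          gcongr
      _ = _ := by ring
  have hshift := (hasSum_nat_add_iff' m).mpr hsum.hasSum
  rw [Finset.sum_eq_zero fun i hi => by rw [egfCoeff_eq_zero_of_lt (Finset.mem_range.mp hi)]; ring,
    sub_zero] at hshift
  rw [hint]
  refine (hshift.mul_left ((2 : ℝ) ^ (m + 1) / m.factorial)).congr_fun fun k => ?_
  rw [egfCoeff, add_comm k m, coeff_scaledPochhammer_eq_Q, Nat.factorial_succ]
  push_cast
  field_simp
  ring

theorem incGamma_succ_arsinh_general (m : ℕ) (t : ℝ) (ht : |t| < 1) :
    ∃ S : ℝ,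
      HasSum (fun k : ℕ =>
        Q (m + 1) (k + m - m) 3 * (2 * t) ^ (k + m + 1) / ((k + m + 1).factorial : ℝ)) S ∧
      incGamma (1 + m) (Real.arsinh t) =
        (m.factorial : ℝ) - (m.factorial : ℝ) / 2 ^ (m + 1) * S := by
  refine ⟨_, by simpa only [Nat.add_sub_cancel] using hasSum_Q_mul_pow m ht, ?_⟩
  rw [incGamma_one_add]
  field_simp

/-- `Γ(1+m, arcsinh t) = m! − (m!/2^{m+1}) ∑_{k=m}^∞ Q(m+1, k−m; 3) (2t)^{k+1}/(k+1)!`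
for `m ≥ 3`. -/
theorem incGamma_succ_arsinh (m : ℕ) (hm : 3 ≤ m) (t : ℝ) (ht : |t| < 1) :
    ∃ S : ℝ,
      HasSum (fun k : ℕ =>
        Q (m + 1) (k + m - m) 3 * (2 * t) ^ (k + m + 1) / ((k + m + 1).factorial : ℝ)) S ∧
      incGamma (1 + m) (Real.arsinh t) =
        (m.factorial : ℝ) - (m.factorial : ℝ) / 2 ^ (m + 1) * S :=
  incGamma_succ_arsinh_general m t ht
end

section
/- For every positive integer n and every real number t with |t| < 1, one has the convergent Maclaurin series expansion (arctan t)^n = n! · Σ_{k=0}^∞ (−1)^k S_{n−1}(k) · t^{2k+n}/(2k+n), where the nested harmonic-type sums S_m(j) are defined by S_0(j) = 1 and S_m(j) = Σ_{i=0}^{j} S_{m−1}(i)/(2i+m) for m ≥ 1. -/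
/-- The nested harmonic-type sums: `S 0 j = 1` and
`S (m+1) j = ∑_{i=0}^{j} S m i / (2i + (m+1))`. -/
noncomputable def nestedS : ℕ → ℕ → ℝ
  | 0, _ => 1
  | m + 1, j => ∑ i ∈ Finset.range (j + 1), nestedS m i / (2 * (i : ℝ) + ((m : ℝ) + 1))

/-!
Let `A_m(x) = ∑ₖ (-1)^k S_m(k) x^(2k+m)` (terms `nestedTerm`) and
`F_m(x) = ∑ₖ (-1)^k S_m(k) x^(2k+m+1)/(2k+m+1)` (terms `nestedPrimitiveTerm`), so that `F_m' = A_m` termwise on `(-1, 1)`; the coefficients are dominated by `(k+m).choose m`,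
which gives convergence and termwise differentiation. Since
`S_m(k)/(2k+m+1) = S_{m+1}(k) - S_{m+1}(k-1)`, the series `F_m` telescopes to `(1 + x²) A_{m+1}`,
while `A_0 = 1/(1 + x²)` is a geometric series. Hence, by induction on `m`,
`(1 + x²) A_m = arctan^m / m!`: both `F_m` and `arctan^(m+1) / (m+1)!` vanish at `0` and have
derivative `arctan^m / (m! (1 + x²))`.
-/

open Finset Real Nat

lemma nestedS_nonneg : ∀ m k, 0 ≤ nestedS m k
  | 0, _ => zero_le_one
  | m + 1, _ => sum_nonneg fun i _ => div_nonneg (nestedS_nonneg m i) (by positivity)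

lemma nestedS_le_choose : ∀ m k, nestedS m k ≤ ((k + m).choose m : ℝ)
  | 0, _ => by simp [nestedS]
  | m + 1, j => by
    rw [nestedS]
    calc ∑ i ∈ range (j + 1), nestedS m i / (2 * (i : ℝ) + ((m : ℝ) + 1))
        ≤ ∑ i ∈ range (j + 1), ((i + m).choose m : ℝ) :=
          sum_le_sum fun i _ => (div_le_self (nestedS_nonneg m i) (by norm_cast; omega)).trans
            (nestedS_le_choose m i)
      _ = ((j + (m + 1)).choose (m + 1) : ℝ) := by
          rw [← Nat.cast_sum, sum_range_add_choose, ← add_assoc]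

lemma nestedS_succ_zero (m : ℕ) : nestedS (m + 1) 0 = nestedS m 0 / (m + 1) := by
  simp [nestedS]

lemma nestedS_succ_succ (m j : ℕ) :
    nestedS (m + 1) (j + 1) =
      nestedS (m + 1) j + nestedS m (j + 1) / (2 * ((j + 1 : ℕ) : ℝ) + (m + 1)) := by
  rw [nestedS, nestedS, sum_range_succ]

noncomputable def nestedTerm (m : ℕ) (x : ℝ) (k : ℕ) : ℝ :=
  (-1) ^ k * nestedS m k * x ^ (2 * k + m)

noncomputable def nestedPrimitiveTerm (m : ℕ) (x : ℝ) (k : ℕ) : ℝ :=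
  (-1) ^ k * nestedS m k * x ^ (2 * k + m + 1) / ((2 * k + m + 1 : ℕ) : ℝ)

lemma norm_nestedTerm_le (m k : ℕ) {x r : ℝ} (hx : |x| ≤ r) (hr : r ≤ 1) :
    ‖nestedTerm m x k‖ ≤ (k + m).choose m * (r ^ 2) ^ k := by
  have hpow : |x| ^ (2 * k + m) ≤ (r ^ 2) ^ k := calc
    |x| ^ (2 * k + m) ≤ r ^ (2 * k + m) := pow_le_pow_left₀ (abs_nonneg x) hx _
    _ ≤ r ^ (2 * k) := pow_le_pow_of_le_one ((abs_nonneg x).trans hx) hr (by omega)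
    _ = (r ^ 2) ^ k := pow_mul r 2 k
  rw [nestedTerm, norm_mul, norm_mul, norm_pow, norm_neg, norm_one, one_pow, one_mul,
    norm_of_nonneg (nestedS_nonneg m k), norm_pow, norm_eq_abs]
  exact mul_le_mul (nestedS_le_choose m k) hpow (by positivity) (by positivity)

lemma summable_choose_mul_sq_pow (m : ℕ) {r : ℝ} (hr₀ : 0 ≤ r) (hr₁ : r < 1) :
    Summable fun k : ℕ => ((k + m).choose m : ℝ) * (r ^ 2) ^ k :=
  summable_choose_mul_geometric_of_norm_lt_one m <| by
    rw [norm_pow, norm_of_nonneg hr₀]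
    exact pow_lt_one₀ hr₀ hr₁ two_ne_zero

lemma summable_nestedTerm (m : ℕ) {x : ℝ} (hx : |x| < 1) : Summable (nestedTerm m x) :=
  .of_norm_bounded (summable_choose_mul_sq_pow m (abs_nonneg x) hx)
    fun k => norm_nestedTerm_le m k le_rfl hx.le

lemma nestedPrimitiveTerm_zero (m : ℕ) (x : ℝ) :
    nestedPrimitiveTerm m x 0 = nestedTerm (m + 1) x 0 := by
  rw [nestedPrimitiveTerm, nestedTerm, nestedS_succ_zero]
  push_cast
  ring

lemma nestedPrimitiveTerm_succ (m : ℕ) (x : ℝ) (k : ℕ) :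
    nestedPrimitiveTerm m x (k + 1) =
      nestedTerm (m + 1) x (k + 1) + x ^ 2 * nestedTerm (m + 1) x k := by
  have hpos : (0 : ℝ) < 2 * ((k + 1 : ℕ) : ℝ) + (m + 1) := by positivity
  rw [nestedPrimitiveTerm, nestedTerm, nestedTerm, nestedS_succ_succ]
  field_simp
  push_cast
  ring

lemma hasSum_nestedPrimitiveTerm (m : ℕ) {x : ℝ} (hx : |x| < 1) :
    HasSum (nestedPrimitiveTerm m x) ((1 + x ^ 2) * ∑' k, nestedTerm (m + 1) x k) := by
  have hA := (summable_nestedTerm (m + 1) hx).hasSum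
  rw [← hasSum_nat_add_iff' 1]
  simp only [range_one, sum_singleton, nestedPrimitiveTerm_succ, nestedPrimitiveTerm_zero]
  convert ((hasSum_nat_add_iff' 1).2 hA).add (hA.mul_left (x ^ 2)) using 1
  simp only [range_one, sum_singleton]
  ring

lemma hasDerivAt_nestedPrimitiveTerm (m k : ℕ) (y : ℝ) :
    HasDerivAt (fun x => nestedPrimitiveTerm m x k) (nestedTerm m y k) y := by
  have hN : ((2 * k + m + 1 : ℕ) : ℝ) ≠ 0 := by positivity
  refine (((hasDerivAt_pow _ y).const_mul ((-1) ^ k * nestedS m k)).div_const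
    ((2 * k + m + 1 : ℕ) : ℝ)).congr_deriv ?_
  rw [nestedTerm, Nat.add_sub_cancel]
  field_simp

lemma hasDerivAt_tsum_nestedPrimitiveTerm (m : ℕ) {x : ℝ} (hx : |x| < 1) :
    HasDerivAt (fun y => ∑' k, nestedPrimitiveTerm m y k) (∑' k, nestedTerm m x k) x := by
  obtain ⟨r, hxr, hr₁⟩ := exists_between hx
  have hx' : x ∈ Set.Ioo (-r) r := abs_lt.1 hxr
  exact hasDerivAt_tsum_of_isPreconnected
    (summable_choose_mul_sq_pow m ((abs_nonneg x).trans hxr.le) hr₁) isOpen_Ioo isPreconnected_Ioo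
    (fun k y _ => hasDerivAt_nestedPrimitiveTerm m k y)
    (fun k y hy => norm_nestedTerm_le m k (abs_le.2 ⟨hy.1.le, hy.2.le⟩) hr₁.le) hx'
    (hasSum_nestedPrimitiveTerm m hx).summable hx'

lemma hasDerivAt_arctan_pow_div_factorial (m : ℕ) (y : ℝ) :
    HasDerivAt (fun x => arctan x ^ (m + 1) / (m + 1)!) (arctan y ^ m / m ! / (1 + y ^ 2)) y := by
  refine (((hasDerivAt_arctan y).pow (m + 1)).div_const ((m + 1)! : ℝ)).congr_deriv ?_
  rw [Nat.add_sub_cancel, Nat.factorial_succ]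
  push_cast
  field_simp

lemma tsum_nestedPrimitiveTerm_eq (m : ℕ)
    (h : ∀ y, |y| < 1 → (1 + y ^ 2) * ∑' k, nestedTerm m y k = arctan y ^ m / m !)
    {x : ℝ} (hx : |x| < 1) :
    ∑' k, nestedPrimitiveTerm m x k = arctan x ^ (m + 1) / (m + 1)! := by
  have hF (y : ℝ) (hy : y ∈ Set.Ioo (-1) 1) := hasDerivAt_tsum_nestedPrimitiveTerm m (abs_lt.2 hy)
  have hG := hasDerivAt_arctan_pow_div_factorial m
  refine isOpen_Ioo.eqOn_of_deriv_eq isPreconnected_Ioo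
    (fun y hy => (hF y hy).differentiableAt.differentiableWithinAt)
    (fun y _ => (hG y).differentiableAt.differentiableWithinAt)
    (fun y hy => ?_) (by norm_num : (0 : ℝ) ∈ Set.Ioo (-1) 1) (by simp [nestedPrimitiveTerm])
    (abs_lt.1 hx)
  rw [(hF y hy).deriv, (hG y).deriv, ← h y (abs_lt.2 hy)]
  field_simp

lemma one_add_sq_mul_tsum_nestedTerm (m : ℕ) {x : ℝ} (hx : |x| < 1) :
    (1 + x ^ 2) * ∑' k, nestedTerm m x k = arctan x ^ m / m ! := by
  induction m generalizing x with
  | zero =>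
    have hgeom := hasSum_geometric_of_norm_lt_one (ξ := -x ^ 2) (by
      rw [norm_neg, norm_pow, norm_eq_abs]; exact pow_lt_one₀ (abs_nonneg x) hx two_ne_zero)
    have hterm : nestedTerm 0 x = fun k => (-x ^ 2) ^ k := by
      ext k
      simp only [nestedTerm, nestedS, mul_one, add_zero]
      rw [pow_mul, neg_pow (x ^ 2)]
    have hpos : 0 < 1 + x ^ 2 := by positivity
    rw [hterm, hgeom.tsum_eq, sub_neg_eq_add, mul_inv_cancel₀ hpos.ne']
    simp
  | succ m ih =>
    rw [← (hasSum_nestedPrimitiveTerm m hx).tsum_eq]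
    exact tsum_nestedPrimitiveTerm_eq m (fun y hy => ih hy) hx

/-- Maclaurin series for `(arctan t)^n`:
`(arctan t)^n = n! ∑_{k=0}^∞ (−1)^k S_{n−1}(k) t^{2k+n}/(2k+n)`. -/
theorem arctan_pow_maclaurin (n : ℕ) (hn : 1 ≤ n) (t : ℝ) (ht : |t| < 1) :
    ∃ S : ℝ,
      HasSum (fun k : ℕ =>
        (-1 : ℝ) ^ k * nestedS (n - 1) k * t ^ (2 * k + n) / ((2 * k + n : ℕ) : ℝ)) S ∧
      Real.arctan t ^ n = (n.factorial : ℝ) * S := by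
  obtain ⟨m, rfl⟩ := Nat.exists_eq_add_of_le' hn
  refine ⟨arctan t ^ (m + 1) / (m + 1)!, ?_, by field_simp⟩
  have hsum := hasSum_nestedPrimitiveTerm m ht
  rw [one_add_sq_mul_tsum_nestedTerm (m + 1) ht] at hsum
  rw [Nat.add_sub_cancel]
  exact hsum
end

section
/- For every positive integer k, one has the combinatorial identity Q(2, 2k; 2) = (−1)^k (k!)²; explicitly, Σ_{ℓ=0}^{2k} (ℓ+1) · s(2k+1, ℓ+1) · k^ℓ = (−1)^k (k!)². -/
namespace QAux

open Polynomial Finset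

noncomputable def fallPoly (n : ℕ) : Polynomial ℤ :=
  ∏ i ∈ Finset.range n, (X - C (i : ℤ))

lemma fallPoly_succ (n : ℕ) : fallPoly (n + 1) = fallPoly n * (X - C (n : ℤ)) := by
  simp [fallPoly, Finset.prod_range_succ]

lemma stirlingFirst_eq_coeff (n j : ℕ) : stirlingFirst n j = (fallPoly n).coeff j := by
  induction n generalizing j with
  | zero =>
    cases j with
    | zero => simp [fallPoly, stirlingFirst]
    | succ j => simp [fallPoly, stirlingFirst, Polynomial.coeff_one]
  | succ n ih =>
    have h : fallPoly (n + 1) = fallPoly n * X - C (n : ℤ) * fallPoly n := by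
      rw [fallPoly_succ]; ring
    cases j with
    | zero =>
      rw [h]
      simp [stirlingFirst, coeff_mul_X_zero, ih]
    | succ j =>
      rw [h]
      simp only [coeff_sub, coeff_mul_X, coeff_C_mul]
      rw [show stirlingFirst (n+1) (j+1) = stirlingFirst n j - (n:ℤ) * stirlingFirst n (j+1) from rfl, ih, ih]

lemma fallPoly_monic (n : ℕ) : (fallPoly n).Monic :=
  monic_prod_of_monic _ _ fun i _ => monic_X_sub_C _

lemma fallPoly_natDegree (n : ℕ) : (fallPoly n).natDegree = n := by
  rw [fallPoly, natDegree_prod_of_monic _ _ fun _ _ => monic_X_sub_C _]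
  simp only [natDegree_X_sub_C, Finset.sum_const, Finset.card_range, smul_eq_mul, mul_one]

theorem key (k : ℕ) :
    ∑ ℓ ∈ Finset.range (2 * k + 1),
        ((ℓ : ℤ) + 1) * stirlingFirst (2 * k + 1) (ℓ + 1) * (k : ℤ) ^ ℓ =
      (-1 : ℤ) ^ k * (k.factorial : ℤ) ^ 2 := by
  have hne : fallPoly (2 * k + 1) ≠ 0 := (fallPoly_monic _).ne_zero
  have hdeg : (derivative (fallPoly (2 * k + 1))).natDegree < 2 * k + 1 := by
    have h0 : (fallPoly (2*k+1)).natDegree ≠ 0 := by rw [fallPoly_natDegree]; omega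
    have := Polynomial.natDegree_derivative_lt h0
    rwa [fallPoly_natDegree] at this
  have heval := Polynomial.eval_eq_sum_range' hdeg (k : ℤ)
  have hsum : ∑ ℓ ∈ Finset.range (2 * k + 1),
        ((ℓ : ℤ) + 1) * stirlingFirst (2 * k + 1) (ℓ + 1) * (k : ℤ) ^ ℓ =
      (derivative (fallPoly (2 * k + 1))).eval (k : ℤ) := by
    rw [heval]
    refine Finset.sum_congr rfl fun ℓ _ => ?_
    rw [Polynomial.coeff_derivative, stirlingFirst_eq_coeff]
    push_cast
    ring
  rw [hsum]
  -- split off the factor (X - C k)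
  have hk_mem : k ∈ Finset.range (2 * k + 1) := by
    simp; omega
  have hfact : fallPoly (2 * k + 1)
      = (X - C (k : ℤ)) * ∏ i ∈ (Finset.range (2*k+1)).erase k, (X - C (i : ℤ)) := by
    rw [fallPoly, ← Finset.mul_prod_erase _ _ hk_mem]
  set q : Polynomial ℤ := ∏ i ∈ (Finset.range (2*k+1)).erase k, (X - C (i : ℤ)) with hq
  have hder : derivative (fallPoly (2*k+1)) = q + (X - C (k:ℤ)) * derivative q := by
    rw [hfact]; simp [derivative_mul]
  rw [hder]
  have : ((X : Polynomial ℤ) - C (k:ℤ)).eval (k:ℤ) = 0 := by simp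
  rw [Polynomial.eval_add, Polynomial.eval_mul, this, zero_mul, add_zero]
  rw [hq, Polynomial.eval_prod]
  have hset : (Finset.range (2*k+1)).erase k = Finset.range k ∪ Finset.Ico (k+1) (2*k+1) := by
    ext x; simp [Finset.mem_erase, Finset.mem_union]; omega
  have hdisj : Disjoint (Finset.range k) (Finset.Ico (k+1) (2*k+1)) := by
    rw [Finset.disjoint_left]; intro a ha hb
    simp at ha hb; omega
  rw [hset, Finset.prod_union hdisj]
  have h1 : ∏ i ∈ Finset.range k, (((X : Polynomial ℤ) - C (i:ℤ)).eval (k:ℤ))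
      = (k.factorial : ℤ) := by
    simp only [eval_sub, eval_X, eval_C]
    rw [← Finset.prod_range_reflect (fun i => (k:ℤ) - i) k]
    rw [show (k.factorial : ℤ) = ∏ i ∈ Finset.range k, ((i:ℤ) + 1) by
      rw [← Finset.prod_range_add_one_eq_factorial k, Nat.cast_prod]; push_cast; rfl]
    refine Finset.prod_congr rfl fun i hi => ?_
    simp at hi
    have : (k : ℤ) - (k - 1 - i : ℕ) = (i:ℤ) + 1 := by
      have : (k - 1 - i : ℕ) = k - 1 - i := rfl
      push_cast [Nat.cast_sub (by omega : i ≤ k - 1), Nat.cast_sub (by omega : 1 ≤ k)]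
      ring
    rw [this]
  have h2 : ∏ i ∈ Finset.Ico (k+1) (2*k+1), (((X : Polynomial ℤ) - C (i:ℤ)).eval (k:ℤ))
      = (-1:ℤ)^k * (k.factorial : ℤ) := by
    simp only [eval_sub, eval_X, eval_C]
    rw [Finset.prod_Ico_eq_prod_range]
    have hlen : 2*k+1 - (k+1) = k := by omega
    rw [hlen]
    have : ∀ i ∈ Finset.range k, (k:ℤ) - (↑(k+1+i)) = -((i:ℤ)+1) := by
      intro i _; push_cast; ring
    rw [Finset.prod_congr rfl this]
    have hp : (∏ i ∈ Finset.range k, -((i:ℤ)+1)) = (-1:ℤ)^k * ∏ i ∈ Finset.range k, ((i:ℤ)+1) := by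
      calc (∏ i ∈ Finset.range k, -((i:ℤ)+1))
          = ∏ i ∈ Finset.range k, ((-1:ℤ) * ((i:ℤ)+1)) :=
            Finset.prod_congr rfl fun i _ => by ring
        _ = (∏ _i ∈ Finset.range k, (-1:ℤ)) * ∏ i ∈ Finset.range k, ((i:ℤ)+1) :=
            Finset.prod_mul_distrib
        _ = (-1:ℤ)^k * ∏ i ∈ Finset.range k, ((i:ℤ)+1) := by
            rw [Finset.prod_const, Finset.card_range]
    rw [hp]
    congr 1
    rw [← Finset.prod_range_add_one_eq_factorial k, Nat.cast_prod]; push_cast; rfl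
  rw [h1, h2]; ring

end QAux

/-- The combinatorial identity `Q(2, 2k; 2) = (−1)^k (k!)²`, i.e. explicitly
`∑_{ℓ=0}^{2k} (ℓ+1) s(2k+1, ℓ+1) k^ℓ = (−1)^k (k!)²`. -/
theorem Q_two_even_two_eq (k : ℕ) (hk : 1 ≤ k) :
    Q 2 (2 * k) 2 = (-1 : ℝ) ^ k * (k.factorial : ℝ) ^ 2 ∧
      ∑ ℓ ∈ Finset.range (2 * k + 1),
          ((ℓ : ℤ) + 1) * stirlingFirst (2 * k + 1) (ℓ + 1) * (k : ℤ) ^ ℓ =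
        (-1 : ℤ) ^ k * (k.factorial : ℤ) ^ 2 := by
  have hZ := QAux.key k
  refine ⟨?_, hZ⟩
  have hQ : Q 2 (2 * k) 2 =
      ((∑ ℓ ∈ Finset.range (2 * k + 1),
          ((ℓ : ℤ) + 1) * stirlingFirst (2 * k + 1) (ℓ + 1) * (k : ℤ) ^ ℓ : ℤ) : ℝ) := by
    rw [Q]
    push_cast
    refine Finset.sum_congr rfl fun ℓ _ => ?_
    have e1 : 2 + ℓ - 1 = ℓ + 1 := by omega
    have e2 : 2 + 2 * k - 1 = 2 * k + 1 := by omega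
    rw [e1, e2, Nat.choose_one_right]
    push_cast
    ring
  rw [hQ, hZ]
  push_cast
  ring
end
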